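/- Consider the skeptical aggregation operator so on an argumentation framework AF = ⟨𝒜, ⇀⟩, and agents 1,…,n each having the Hamming distance based preference ⪰_{i,|⊖|}, where agent i's most preferred labeling is the complete labeling ℒᵢ. Let P = (ℒ₁,…,ℒₙ) be the sincere profile, let k be an agent and ℒ'ₖ a labeling, and let P' be P with ℒₖ replaced by ℒ'ₖ; suppose so(P) and so(P') exist. If ℒ'ₖ is a strategic lie for agent k, i.e. so(P') ≻_{k,|⊖|} so(P), then the lie is benevolent: so(P') ⪰_{i,|⊖|} so(P) for every agent i, and so(P') ≻_{j,|⊖|} so(P) for some agent j ≠ k. -/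
import Mathlib


/- Labels for arguments: in, out, undec -/
inductive Lab where
  | IN : Lab
  | OUT : Lab
  | UNDEC : Lab
deriving DecidableEq

variable {A : Type}

/-- Arguments labeled `in` by a labeling. -/
def labIn (L : A → Lab) : Set A := {a | L a = Lab.IN}
/-- Arguments labeled `out` by a labeling. -/
def labOut (L : A → Lab) : Set A := {a | L a = Lab.OUT}
/-- Arguments labeled `undec` by a labeling. -/
def labUndec (L : A → Lab) : Set A := {a | L a = Lab.UNDEC}
/-- Decided arguments: labeled `in` or `out`. -/
def labDec (L : A → Lab) : Set A := labIn L ∪ labOut L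

/-- Admissible labeling with respect to a defeat relation `df` (`df b a` : b defeats a). -/
def Admissible (df : A → A → Prop) (L : A → Lab) : Prop :=
  ∀ a : A,
    (L a = Lab.IN → ∀ b : A, df b a → L b = Lab.OUT) ∧
    (L a = Lab.OUT → ∃ b : A, df b a ∧ L b = Lab.IN)

/-- Complete labeling. -/
def Complete (df : A → A → Prop) (L : A → Lab) : Prop :=
  Admissible df L ∧
  ∀ a : A, L a = Lab.UNDEC →
    ¬ (∀ b : A, df b a → L b = Lab.OUT) ∧ ¬ (∃ b : A, df b a ∧ L b = Lab.IN)

/-- `L1 ⊑ L2` : less or equally committed. -/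
def LabLeq (L1 L2 : A → Lab) : Prop := labIn L1 ⊆ labIn L2 ∧ labOut L1 ⊆ labOut L2

/-- `L1 ≈ L2` : compatible labelings. -/
def LabCompatible (L1 L2 : A → Lab) : Prop :=
  labIn L1 ∩ labOut L2 = ∅ ∧ labOut L1 ∩ labIn L2 = ∅

/-- Hamming set `L1 ⊖ L2`. -/
def hamSet (L1 L2 : A → Lab) : Set A := {a | L1 a ≠ L2 a}
/-- Hamming distance `L1 |⊖| L2`. -/
noncomputable def hamDist (L1 L2 : A → Lab) : ℕ := (hamSet L1 L2).ncard

/-- in–out Hamming set `L1 ⊖ⁱᵒ L2`. -/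
def ioSet (L1 L2 : A → Lab) : Set A :=
  {a | (L1 a = Lab.IN ∧ L2 a = Lab.OUT) ∨ (L1 a = Lab.OUT ∧ L2 a = Lab.IN)}
/-- dec–undec Hamming set `L1 ⊖ᵈᵘ L2`. -/
def duSet (L1 L2 : A → Lab) : Set A :=
  {a | (a ∈ labDec L1 ∧ L2 a = Lab.UNDEC) ∨ (L1 a = Lab.UNDEC ∧ a ∈ labDec L2)}
/-- IUO Hamming sets `L1 ⊖ᴹ L2` as a pair. -/
def iuoSets (L1 L2 : A → Lab) : Set A × Set A := (ioSet L1 L2, duSet L1 L2)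
/-- Componentwise inclusion on pairs of sets. -/
def PairSub {α : Type} (p q : Set α × Set α) : Prop := p.1 ⊆ q.1 ∧ p.2 ⊆ q.2
/-- IUO Hamming distance `L1 |⊖ᴹ| L2`. -/
noncomputable def iuoDist (L1 L2 : A → Lab) : ℕ :=
  2 * (ioSet L1 L2).ncard + (duSet L1 L2).ncard

/-- Two arguments are in-sync (with respect to the complete labelings of the framework). -/
def InSync (df : A → A → Prop) (a b : A) : Prop :=
  (∀ L : A → Lab, Complete df L → L a = L b) ∨
  (∀ L : A → Lab, Complete df L →
    (L a = Lab.IN ↔ L b = Lab.OUT) ∧ (L a = Lab.OUT ↔ L b = Lab.IN))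

/-- An issue: an equivalence class of the in-sync relation. -/
def IsIssue (df : A → A → Prop) (B : Set A) : Prop :=
  ∃ a : A, B = {b | InSync df a b}

/-- Issue-wise set `L1 ⊖_W L2`. -/
def iwSet (df : A → A → Prop) (L1 L2 : A → Lab) : Set (Set A) :=
  {B | IsIssue df B ∧ ∃ a ∈ B, L1 a ≠ L2 a}
/-- Issue-wise distance `L1 |⊖_W| L2`. -/
noncomputable def iwDist (df : A → A → Prop) (L1 L2 : A → Lab) : ℕ := (iwSet df L1 L2).ncard

/-- in–out Issue-wise set `L1 ⊖_Wⁱᵒ L2`. -/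
def iwIoSet (df : A → A → Prop) (L1 L2 : A → Lab) : Set (Set A) :=
  {B | IsIssue df B ∧ ∃ a ∈ B, a ∈ ioSet L1 L2}
/-- dec–undec Issue-wise set `L1 ⊖_Wᵈᵘ L2`. -/
def iwDuSet (df : A → A → Prop) (L1 L2 : A → Lab) : Set (Set A) :=
  {B | IsIssue df B ∧ ∃ a ∈ B, a ∈ duSet L1 L2}
/-- IUO Issue-wise sets `L1 ⊖_Wᴹ L2` as a pair. -/
def iwIuoSets (df : A → A → Prop) (L1 L2 : A → Lab) : Set (Set A) × Set (Set A) :=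
  (iwIoSet df L1 L2, iwDuSet df L1 L2)
/-- IUO Issue-wise distance `L1 |⊖_Wᴹ| L2`. -/
noncomputable def iwIuoDist (df : A → A → Prop) (L1 L2 : A → Lab) : ℕ :=
  2 * (iwIoSet df L1 L2).ncard + (iwDuSet df L1 L2).ncard

/- Preferences: `pref Li L L'` means `L ⪰ L'` for an agent whose most preferred labeling is `Li`. -/
/-- Hamming set based preference `⪰_{i,⊖}`. -/
def hamSetPref (Li L L' : A → Lab) : Prop := hamSet L Li ⊆ hamSet L' Li
/-- Hamming distance based preference `⪰_{i,|⊖|}`. -/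
def hamDistPref (Li L L' : A → Lab) : Prop := hamDist L Li ≤ hamDist L' Li
/-- IUO Hamming sets based preference `⪰_{i,⊖ᴹ}`. -/
def iuoSetPref (Li L L' : A → Lab) : Prop := PairSub (iuoSets L Li) (iuoSets L' Li)
/-- IUO Hamming distance based preference `⪰_{i,|⊖ᴹ|}`. -/
def iuoDistPref (Li L L' : A → Lab) : Prop := iuoDist L Li ≤ iuoDist L' Li
/-- Issue-wise set based preference `⪰_{i,⊖_W}`. -/
def iwSetPref (df : A → A → Prop) (Li L L' : A → Lab) : Prop := iwSet df L Li ⊆ iwSet df L' Li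
/-- Issue-wise distance based preference `⪰_{i,|⊖_W|}`. -/
def iwDistPref (df : A → A → Prop) (Li L L' : A → Lab) : Prop := iwDist df L Li ≤ iwDist df L' Li
/-- IUO Issue-wise sets based preference `⪰_{i,⊖_Wᴹ}`. -/
def iwIuoSetPref (df : A → A → Prop) (Li L L' : A → Lab) : Prop :=
  PairSub (iwIuoSets df L Li) (iwIuoSets df L' Li)
/-- IUO Issue-wise distance based preference `⪰_{i,|⊖_Wᴹ|}`. -/
def iwIuoDistPref (df : A → A → Prop) (Li L L' : A → Lab) : Prop :=
  iwIuoDist df L Li ≤ iwIuoDist df L' Li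

/-- Strict part of a preference relation. -/
def StrictPref (pref : (A → Lab) → (A → Lab) → Prop) (L L' : A → Lab) : Prop :=
  pref L L' ∧ ¬ pref L' L

/-- `L'` Pareto dominates `L` with respect to the profile of preference relations `pref`. -/
def Dominates {ι : Type} (pref : ι → (A → Lab) → (A → Lab) → Prop) (L' L : A → Lab) : Prop :=
  (∀ i : ι, pref i L' L) ∧ ∃ j : ι, StrictPref (pref j) L' L

/-- `L` is Pareto optimal in `S`: no element of `S` Pareto dominates `L`. -/
def ParetoOptimalIn {ι : Type} (pref : ι → (A → Lab) → (A → Lab) → Prop)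
    (S : Set (A → Lab)) (L : A → Lab) : Prop :=
  ∀ L' ∈ S, ¬ Dominates pref L' L

/-- `LSO` is the skeptical outcome of profile `P`: the greatest admissible labeling below the
profile. -/
def IsSkeptical {n : ℕ} (df : A → A → Prop) (P : Fin n → (A → Lab)) (LSO : A → Lab) : Prop :=
  Admissible df LSO ∧ (∀ i : Fin n, LabLeq LSO (P i)) ∧
  ∀ L : A → Lab, Admissible df L → (∀ i : Fin n, LabLeq L (P i)) → LabLeq L LSO

/-- `LC` is the credulous initial outcome of the profile `P`. -/
def IsCio {n : ℕ} (P : Fin n → (A → Lab)) (LC : A → Lab) : Prop :=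
  ∀ a : A,
    (LC a = Lab.IN ↔ (∃ i : Fin n, P i a = Lab.IN) ∧ ∀ j : Fin n, P j a ≠ Lab.OUT) ∧
    (LC a = Lab.OUT ↔ (∃ i : Fin n, P i a = Lab.OUT) ∧ ∀ j : Fin n, P j a ≠ Lab.IN)

/-- `LCO` is the credulous outcome of `P`: the greatest admissible labeling `⊑ cio(P)`. -/
def IsCredulous {n : ℕ} (df : A → A → Prop) (P : Fin n → (A → Lab)) (LCO : A → Lab) : Prop :=
  ∃ LCIO : A → Lab, IsCio P LCIO ∧ Admissible df LCO ∧ LabLeq LCO LCIO ∧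
    ∀ L : A → Lab, Admissible df L → LabLeq L LCIO → LabLeq L LCO

/-- `LSCO` is the super credulous outcome of `P` given credulous outcome `LCO`:
the least complete labeling above `LCO`. -/
def IsSuperCredulousOf (df : A → A → Prop) (LCO LSCO : A → Lab) : Prop :=
  Complete df LSCO ∧ LabLeq LCO LSCO ∧
    ∀ L : A → Lab, Complete df L → LabLeq LCO L → LabLeq LSCO L

lemma labLeq_cases {L1 L2 : A → Lab} (h : LabLeq L1 L2) (a : A) :
    L1 a = L2 a ∨ (L1 a = Lab.UNDEC ∧ L2 a ≠ Lab.UNDEC) := by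
  rcases h with ⟨hin, hout⟩
  cases h1 : L1 a with
  | IN => exact Or.inl (show L2 a = Lab.IN from hin h1).symm
  | OUT => exact Or.inl (show L2 a = Lab.OUT from hout h1).symm
  | UNDEC =>
    by_cases h2 : L2 a = Lab.UNDEC
    · exact Or.inl h2.symm
    · exact Or.inr ⟨rfl, h2⟩

lemma mem_labDec_iff (L : A → Lab) (a : A) : a ∈ labDec L ↔ L a ≠ Lab.UNDEC := by
  simp only [labDec, labIn, labOut, Set.mem_union, Set.mem_setOf_eq]
  cases L a <;> simp

lemma labLeq_dec_subset {L1 L2 : A → Lab} (h : LabLeq L1 L2) : labDec L1 ⊆ labDec L2 := by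
  intro a ha
  rw [mem_labDec_iff] at *
  rcases labLeq_cases h a with he | ⟨h1, _⟩
  · rwa [← he]
  · exact absurd h1 ha

lemma hamDist_add_of_leq [Fintype A] {L1 L2 : A → Lab} (h : LabLeq L1 L2) :
    hamDist L1 L2 + (labDec L1).ncard = (labDec L2).ncard := by
  have hset : hamSet L1 L2 = labDec L2 \ labDec L1 := by
    ext a
    simp only [hamSet, Set.mem_setOf_eq, Set.mem_diff, mem_labDec_iff]
    rcases labLeq_cases h a with he | ⟨h1, h2⟩
    · simp [he]
    · simp only [h1, h2]
      constructor
      · intro _; exact ⟨h2, fun hc => hc rfl⟩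
      · intro _ he; exact h2 he.symm
  rw [hamDist, hset]
  exact Set.ncard_diff_add_ncard_of_subset (labLeq_dec_subset h) (Set.toFinite _)

lemma dec_le_of_ham [Fintype A] (L1 L2 : A → Lab) :
    (labDec L2).ncard ≤ (labDec L1).ncard + hamDist L1 L2 := by
  have hsub : labDec L2 ⊆ labDec L1 ∪ hamSet L1 L2 := by
    intro a ha
    by_cases hd : a ∈ labDec L1
    · exact Or.inl hd
    · right
      rw [mem_labDec_iff] at ha hd
      push_neg at hd
      intro he
      exact ha (he ▸ hd)
  calc (labDec L2).ncard ≤ (labDec L1 ∪ hamSet L1 L2).ncard :=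
        Set.ncard_le_ncard hsub (Set.toFinite _)
    _ ≤ (labDec L1).ncard + (hamSet L1 L2).ncard := Set.ncard_union_le _ _

lemma labLeq_antisymm {L1 L2 : A → Lab} (h : LabLeq L1 L2) (h' : LabLeq L2 L1) (a : A) :
    L1 a = L2 a := by
  rcases labLeq_cases h a with he | ⟨h1, h2⟩
  · exact he
  · rcases labLeq_cases h' a with he | ⟨h1', h2'⟩
    · exact he.symm
    · exact absurd h1 h2'

/-- with the skeptical operator and Hamming distance based preferences, every
strategic lie is benevolent. -/
theorem skeptical_lies_benevolent_hamDist {A : Type} [Fintype A] {n : ℕ}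
    (df : A → A → Prop) (P : Fin n → (A → Lab)) (hP : ∀ i : Fin n, Complete df (P i))
    (k : Fin n) (L'k : A → Lab) (LSO L'SO : A → Lab)
    (hSO : IsSkeptical df P LSO)
    (hSO' : IsSkeptical df (Function.update P k L'k) L'SO)
    (hlie : StrictPref (hamDistPref (P k)) L'SO LSO) :
    (∀ i : Fin n, hamDistPref (P i) L'SO LSO) ∧
    ∃ j : Fin n, j ≠ k ∧ StrictPref (hamDistPref (P j)) L'SO LSO := by
  obtain ⟨hle, hnle⟩ := hlie
  have hlt : hamDist L'SO (P k) < hamDist LSO (P k) := by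
    rcases lt_or_ge (hamDist L'SO (P k)) (hamDist LSO (P k)) with h | h
    · exact h
    · exact absurd h hnle
  -- LSO ⊑ P k, so distance is additive
  have hEqK : hamDist LSO (P k) + (labDec LSO).ncard = (labDec (P k)).ncard :=
    hamDist_add_of_leq (hSO.2.1 k)
  have hBndK : (labDec (P k)).ncard ≤ (labDec L'SO).ncard + hamDist L'SO (P k) :=
    dec_le_of_ham _ _
  have hdec : (labDec LSO).ncard < (labDec L'SO).ncard := by omega
  -- every agent i ≠ k gets strictly closer
  have hstrict : ∀ i : Fin n, i ≠ k → StrictPref (hamDistPref (P i)) L'SO LSO := by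
    intro i hik
    have hEqI : hamDist LSO (P i) + (labDec LSO).ncard = (labDec (P i)).ncard :=
      hamDist_add_of_leq (hSO.2.1 i)
    have hle' : LabLeq L'SO (P i) := by
      have := hSO'.2.1 i
      rwa [Function.update_of_ne hik] at this
    have hEqI' : hamDist L'SO (P i) + (labDec L'SO).ncard = (labDec (P i)).ncard :=
      hamDist_add_of_leq hle'
    have hlt' : hamDist L'SO (P i) < hamDist LSO (P i) := by omega
    exact ⟨le_of_lt hlt', not_le_of_gt hlt'⟩
  constructor
  · intro i
    by_cases hik : i = k
    · rw [hik]; exact hle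
    · exact (hstrict i hik).1
  · -- there must be an agent other than k
    by_cases hex : ∃ j : Fin n, j ≠ k
    · obtain ⟨j, hjk⟩ := hex
      exact ⟨j, hjk, hstrict j hjk⟩
    · push_neg at hex
      -- all agents equal k, so LSO = P k and the lie is impossible
      exfalso
      have hPk : LabLeq (P k) LSO := by
        apply hSO.2.2 (P k) (hP k).1
        intro i
        rw [hex i]
        exact ⟨fun _ h => h, fun _ h => h⟩
      have : hamDist LSO (P k) = 0 := by
        rw [hamDist]
        have : hamSet LSO (P k) = ∅ := by
          ext a
          simp only [hamSet, Set.mem_setOf_eq, Set.mem_empty_iff_false, iff_false, not_not]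
          exact labLeq_antisymm (hSO.2.1 k) hPk a
        rw [this, Set.ncard_empty]
      omega
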